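/- arXiv:1604.06039 — 6 statements merged into one kernel-verified Lean document; each statement's English description precedes it below -/
import Mathlib

section
/- Let $n \geq 3$, $R > 0$, and let $w$ be a positive function on $\bar B_R(0) \subset \mathbb{R}^n$ satisfying $|\ln w(y) - \ln w(z)| \leq L|y-z|$ for all $y, z \in \bar B_R(0)$, for some $L > 0$. Set $\underline{\lambda} = \min(\frac{n-2}{2L}, \frac{R}{2})$. Then for every $0 < \lambda < \underline{\lambda}$ and every $y$ with $\lambda \leq |y| < \underline{\lambda}$, one has $w_\lambda(y) := \frac{\lambda^{n-2}}{|y|^{n-2}} w\big(\frac{\lambda^2 y}{|y|^2}\big) \leq w(y)$. -/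
open Metric Set

/-!
Write `r = ‖y‖` and `z = (λ/r)² y` for the inverted point, so that `‖y - z‖ = r - λ²/r`.
The log-Lipschitz bound gives `w z ≤ w y · exp (L (r - λ²/r))`, and with `t ≤ exp (t - 1)`
the factor `(λ/r)^(n-2) · exp (L (r - λ²/r))` is at most
`exp ((r - λ) (L (r + λ) - (n - 2)) / r)`, which is `≤ 1` because `r, λ < (n - 2) / (2L)`.
-/

theorem norm_smul_sub_self_of_le_one {E : Type*} [SeminormedAddCommGroup E] [NormedSpace ℝ E]
    {c : ℝ} (hc : c ≤ 1) (y : E) : ‖c • y - y‖ = (1 - c) * ‖y‖ := by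
  rw [norm_sub_rev, show y - c • y = (1 - c) • y by module, norm_smul,
    Real.norm_of_nonneg (by linarith)]

theorem Real.le_mul_exp_of_log_sub_le {a b d : ℝ} (ha : 0 < a) (hb : 0 < b)
    (h : Real.log a - Real.log b ≤ d) : a ≤ b * Real.exp d := by
  calc a = Real.exp (Real.log a) := (Real.exp_log ha).symm
    _ ≤ Real.exp (Real.log b + d) := Real.exp_le_exp.mpr (by linarith)
    _ = b * Real.exp d := by rw [Real.exp_add, Real.exp_log hb]

theorem Real.pow_le_exp_mul_sub_one {t : ℝ} (ht : 0 ≤ t) (m : ℕ) :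
    t ^ m ≤ Real.exp (m * (t - 1)) := by
  rw [Real.exp_nat_mul]
  gcongr
  linarith [Real.add_one_le_exp (t - 1)]

theorem div_pow_mul_exp_le_one {lam r L : ℝ} {m : ℕ} (hlam : 0 < lam) (hr : lam ≤ r)
    (hL : L * (r + lam) ≤ m) : (lam / r) ^ m * Real.exp (L * (r - lam ^ 2 / r)) ≤ 1 := by
  have hr₀ : 0 < r := hlam.trans_le hr
  have hexponent :
      m * (lam / r - 1) + L * (r - lam ^ 2 / r) = (r - lam) * (L * (r + lam) - m) / r := by
    field_simp
    ring
  calc (lam / r) ^ m * Real.exp (L * (r - lam ^ 2 / r))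
      ≤ Real.exp (m * (lam / r - 1)) * Real.exp (L * (r - lam ^ 2 / r)) := by
        gcongr
        exact Real.pow_le_exp_mul_sub_one (by positivity) m
    _ = Real.exp ((r - lam) * (L * (r + lam) - m) / r) := by rw [← Real.exp_add, hexponent]
    _ ≤ 1 := by
        rw [Real.exp_le_one_iff]
        exact div_nonpos_of_nonpos_of_nonneg
          (mul_nonpos_of_nonneg_of_nonpos (by linarith) (by linarith)) hr₀.le

theorem moving_spheres_start_general (n : ℕ) (hn : 3 ≤ n) (R L : ℝ) (hL : 0 < L)
    (w : EuclideanSpace ℝ (Fin n) → ℝ)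
    (hpos : ∀ y ∈ closedBall (0 : EuclideanSpace ℝ (Fin n)) R, 0 < w y)
    (hlip : ∀ y ∈ closedBall (0 : EuclideanSpace ℝ (Fin n)) R,
      ∀ z ∈ closedBall (0 : EuclideanSpace ℝ (Fin n)) R,
        |Real.log (w y) - Real.log (w z)| ≤ L * ‖y - z‖) :
    ∀ lam : ℝ, 0 < lam → lam < min (((n : ℝ) - 2) / (2 * L)) (R / 2) →
      ∀ y : EuclideanSpace ℝ (Fin n), lam ≤ ‖y‖ →
        ‖y‖ < min (((n : ℝ) - 2) / (2 * L)) (R / 2) →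
          (lam ^ (n - 2) / ‖y‖ ^ (n - 2)) * w ((lam ^ 2 / ‖y‖ ^ 2) • y) ≤ w y := by
  intro lam hlam hlam_lt y hy_ge hy_lt
  set r := ‖y‖ with hr_def
  have hr : 0 < r := hlam.trans_le hy_ge
  rw [lt_min_iff, lt_div_iff₀ (by positivity)] at hlam_lt hy_lt
  have hexponent : L * (r + lam) ≤ ((n - 2 : ℕ) : ℝ) := by
    rw [Nat.cast_sub (by omega)]
    push_cast
    linarith
  have hc₀ : 0 ≤ lam ^ 2 / r ^ 2 := by positivity
  have hc₁ : lam ^ 2 / r ^ 2 ≤ 1 := div_le_one_of_le₀ (by gcongr) (by positivity)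
  have hyB : y ∈ closedBall 0 R := by
    rw [mem_closedBall_zero_iff]
    linarith
  have hzB : (lam ^ 2 / r ^ 2) • y ∈ closedBall 0 R := by
    rw [mem_closedBall_zero_iff, norm_smul, Real.norm_of_nonneg hc₀]
    nlinarith
  have hdist : ‖(lam ^ 2 / r ^ 2) • y - y‖ = r - lam ^ 2 / r := by
    rw [norm_smul_sub_self_of_le_one hc₁, ← hr_def]
    field_simp
  have hw : w ((lam ^ 2 / r ^ 2) • y) ≤ w y * Real.exp (L * (r - lam ^ 2 / r)) :=
    Real.le_mul_exp_of_log_sub_le (hpos _ hzB) (hpos y hyB)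
      ((le_abs_self _).trans ((hlip _ hzB y hyB).trans_eq (by rw [hdist])))
  calc lam ^ (n - 2) / r ^ (n - 2) * w ((lam ^ 2 / r ^ 2) • y)
      ≤ (lam / r) ^ (n - 2) * (w y * Real.exp (L * (r - lam ^ 2 / r))) := by
        rw [div_pow]
        gcongr
    _ = ((lam / r) ^ (n - 2) * Real.exp (L * (r - lam ^ 2 / r))) * w y := by ring
    _ ≤ w y := mul_le_of_le_one_left (hpos y hyB).le (div_pow_mul_exp_le_one hlam hy_ge hexponent)

/-- starting point for the method of moving spheres for log-Lipschitz
positive functions: for `λ < min((n-2)/(2L), R/2)`, the Kelvin transform `w_λ`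
lies below `w` on `B_{λ̲} \ B_λ`. -/
theorem moving_spheres_start (n : ℕ) (hn : 3 ≤ n) (R L : ℝ) (hR : 0 < R) (hL : 0 < L)
    (w : EuclideanSpace ℝ (Fin n) → ℝ)
    (hpos : ∀ y ∈ closedBall (0 : EuclideanSpace ℝ (Fin n)) R, 0 < w y)
    (hlip : ∀ y ∈ closedBall (0 : EuclideanSpace ℝ (Fin n)) R,
      ∀ z ∈ closedBall (0 : EuclideanSpace ℝ (Fin n)) R,
        |Real.log (w y) - Real.log (w z)| ≤ L * ‖y - z‖) :
    ∀ lam : ℝ, 0 < lam → lam < min (((n : ℝ) - 2) / (2 * L)) (R / 2) →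
      ∀ y : EuclideanSpace ℝ (Fin n), lam ≤ ‖y‖ →
        ‖y‖ < min (((n : ℝ) - 2) / (2 * L)) (R / 2) →
          (lam ^ (n - 2) / ‖y‖ ^ (n - 2)) * w ((lam ^ 2 / ‖y‖ ^ 2) • y) ≤ w y :=
  moving_spheres_start_general n hn R L hL w hpos hlip
end

section
/- Let $n \geq 3$ and let $w: \bar B_R(0) \to (0,\infty)$ be continuous. Write $w$ in polar coordinates $w(r,\theta)$. Then the inequality $w_\lambda \leq w$ on $B_{\mu}(0) \setminus B_\lambda(0)$ for all $0 < \lambda < \mu$ (where $w_\lambda(y) = \frac{\lambda^{n-2}}{|y|^{n-2}} w(\frac{\lambda^2 y}{|y|^2})$ and $\mu \leq R$) holds if and only if $r^{\frac{n-2}{2}} w(r,\theta) \leq s^{\frac{n-2}{2}} w(s,\theta)$ for all $0 < r < s < \mu$ and all unit directions $\theta$. -/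
/-!
With `r = λ² / s`, the Kelvin transform at radius `λ` sends the point `s θ` to `r θ`, and
`λ^(n-2) = r^((n-2)/2) s^((n-2)/2)` because `λ² = r s`. So `w_λ(s θ) ≤ w(s θ)` is exactly
`r^((n-2)/2) w(r θ) ≤ s^((n-2)/2) w(s θ)`, and `(λ, s) ↦ (λ² / s, s)` matches the pairs
`0 < λ < s < μ` with the pairs `0 < r < s < μ`.
-/

open Metric Set

lemma pow_eq_rpow_half_mul_rpow_half {lam r s : ℝ} (k : ℕ) (hlam : 0 ≤ lam) (hr : 0 ≤ r)
    (hs : 0 ≤ s) (h : lam ^ 2 = r * s) :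
    lam ^ k = r ^ ((k : ℝ) / 2) * s ^ ((k : ℝ) / 2) := by
  rw [← Real.mul_rpow hr hs, ← h, ← Real.rpow_natCast lam 2, ← Real.rpow_mul hlam,
    ← Real.rpow_natCast]
  congr 1
  push_cast
  ring

section Kelvin

variable {E : Type*} [NormedAddCommGroup E] [NormedSpace ℝ E]

lemma kelvin_le_iff_polar_le (w : E → ℝ) (k : ℕ) {lam s : ℝ} (hlam : 0 < lam) (hs : 0 < s)
    {θ : E} (hθ : ‖θ‖ = 1) :
    lam ^ k / ‖s • θ‖ ^ k * w ((lam ^ 2 / ‖s • θ‖ ^ 2) • s • θ) ≤ w (s • θ) ↔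
      (lam ^ 2 / s) ^ ((k : ℝ) / 2) * w ((lam ^ 2 / s) • θ) ≤ s ^ ((k : ℝ) / 2) * w (s • θ) := by
  set r := lam ^ 2 / s
  have hr : 0 < r := by positivity
  have hnorm : ‖s • θ‖ = s := by rw [norm_smul, hθ, Real.norm_of_nonneg hs.le, mul_one]
  have hsmul : (lam ^ 2 / s ^ 2) • s • θ = r • θ := by
    rw [smul_smul]
    congr 1
    simp only [r]
    field_simp
  have hlamk := pow_eq_rpow_half_mul_rpow_half k hlam.le hr.le hs.le
    (by simp only [r]; field_simp)
  have hsk := pow_eq_rpow_half_mul_rpow_half k hs.le hs.le hs.le (sq s)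
  have hsp : 0 < s ^ ((k : ℝ) / 2) := by positivity
  rw [hnorm, hsmul, hlamk, hsk, mul_div_mul_right _ _ hsp.ne', div_mul_eq_mul_div,
    div_le_iff₀ hsp, mul_comm (w _)]

lemma polar_le_of_kelvin_le (w : E → ℝ) (k : ℕ) (μ : ℝ)
    (H : ∀ lam : ℝ, 0 < lam → lam < μ → ∀ y : E, lam ≤ ‖y‖ → ‖y‖ < μ →
      lam ^ k / ‖y‖ ^ k * w ((lam ^ 2 / ‖y‖ ^ 2) • y) ≤ w y)
    {r s : ℝ} {θ : E} (hθ : ‖θ‖ = 1) (hr : 0 < r) (hrs : r < s) (hsμ : s < μ) :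
    r ^ ((k : ℝ) / 2) * w (r • θ) ≤ s ^ ((k : ℝ) / 2) * w (s • θ) := by
  have hs : 0 < s := hr.trans hrs
  set lam := Real.sqrt (r * s)
  have hlam : 0 < lam := Real.sqrt_pos.mpr (mul_pos hr hs)
  have hlams : lam < s := by
    calc lam < Real.sqrt (s * s) := Real.sqrt_lt_sqrt (mul_pos hr hs).le (by gcongr)
      _ = s := Real.sqrt_mul_self hs.le
  have hnorm : ‖s • θ‖ = s := by rw [norm_smul, hθ, Real.norm_of_nonneg hs.le, mul_one]
  have hr_eq : lam ^ 2 / s = r := by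
    rw [Real.sq_sqrt (mul_pos hr hs).le]
    field_simp
  have h := H lam hlam (hlams.trans hsμ) (s • θ) (by rw [hnorm]; exact hlams.le) (by rwa [hnorm])
  rwa [kelvin_le_iff_polar_le w k hlam hs hθ, hr_eq] at h

lemma kelvin_le_of_polar_le (w : E → ℝ) (k : ℕ) (μ : ℝ)
    (H : ∀ r s : ℝ, ∀ θ : E, ‖θ‖ = 1 → 0 < r → r < s → s < μ →
      r ^ ((k : ℝ) / 2) * w (r • θ) ≤ s ^ ((k : ℝ) / 2) * w (s • θ))
    {lam : ℝ} (hlam : 0 < lam) {y : E} (hlamy : lam ≤ ‖y‖) (hyμ : ‖y‖ < μ) :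
    lam ^ k / ‖y‖ ^ k * w ((lam ^ 2 / ‖y‖ ^ 2) • y) ≤ w y := by
  have hy : 0 < ‖y‖ := hlam.trans_le hlamy
  rcases hlamy.eq_or_lt with heq | hlt
  · rw [← heq, div_self (by positivity), div_self (by positivity), one_smul, one_mul]
  have hθ : ‖‖y‖⁻¹ • y‖ = 1 := norm_smul_inv_norm (norm_pos_iff.mp hy)
  have hpolar : ‖y‖ • ‖y‖⁻¹ • y = y := smul_inv_smul₀ hy.ne' y
  have hrs : lam ^ 2 / ‖y‖ < ‖y‖ := by
    rw [div_lt_iff₀ hy, ← sq]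
    exact pow_lt_pow_left₀ hlt hlam.le two_ne_zero
  have h := H _ _ _ hθ (by positivity) hrs hyμ
  rwa [← kelvin_le_iff_polar_le w k hlam hy hθ, hpolar] at h

end Kelvin

theorem kelvin_iff_polar_monotone_general (n : ℕ) (hn : 3 ≤ n) (μ : ℝ)
    (w : EuclideanSpace ℝ (Fin n) → ℝ) :
    (∀ lam : ℝ, 0 < lam → lam < μ →
        ∀ y : EuclideanSpace ℝ (Fin n), lam ≤ ‖y‖ → ‖y‖ < μ →
          (lam ^ (n - 2) / ‖y‖ ^ (n - 2)) * w ((lam ^ 2 / ‖y‖ ^ 2) • y) ≤ w y)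
    ↔
    (∀ r s : ℝ, ∀ θ : EuclideanSpace ℝ (Fin n), ‖θ‖ = 1 →
        0 < r → r < s → s < μ →
          r ^ (((n : ℝ) - 2) / 2) * w (r • θ) ≤ s ^ (((n : ℝ) - 2) / 2) * w (s • θ)) := by
  have hk : (n : ℝ) - 2 = ((n - 2 : ℕ) : ℝ) := by
    rw [Nat.cast_sub (by omega : 2 ≤ n), Nat.cast_ofNat]
  rw [hk]
  exact ⟨fun H r s θ hθ hr hrs hsμ => polar_le_of_kelvin_le w (n - 2) μ H hθ hr hrs hsμ,
    fun H lam hlam _ y hlamy hyμ => kelvin_le_of_polar_le w (n - 2) μ H hlam hlamy hyμ⟩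

/-- the moving-spheres inequality `w_λ ≤ w` on `B_μ \ B_λ` for all
`0 < λ < μ` is equivalent to the monotonicity of `r ↦ r^{(n-2)/2} w(r,θ)` in
polar coordinates. -/
theorem kelvin_iff_polar_monotone (n : ℕ) (hn : 3 ≤ n) (R μ : ℝ) (hR : 0 < R)
    (hμ : 0 < μ) (hμR : μ ≤ R)
    (w : EuclideanSpace ℝ (Fin n) → ℝ)
    (hw : ContinuousOn w (closedBall (0 : EuclideanSpace ℝ (Fin n)) R))
    (hpos : ∀ y ∈ closedBall (0 : EuclideanSpace ℝ (Fin n)) R, 0 < w y) :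
    (∀ lam : ℝ, 0 < lam → lam < μ →
        ∀ y : EuclideanSpace ℝ (Fin n), lam ≤ ‖y‖ → ‖y‖ < μ →
          (lam ^ (n - 2) / ‖y‖ ^ (n - 2)) * w ((lam ^ 2 / ‖y‖ ^ 2) • y) ≤ w y)
    ↔
    (∀ r s : ℝ, ∀ θ : EuclideanSpace ℝ (Fin n), ‖θ‖ = 1 →
        0 < r → r < s → s < μ →
          r ^ (((n : ℝ) - 2) / 2) * w (r • θ) ≤ s ^ (((n : ℝ) - 2) / 2) * w (s • θ)) :=
  kelvin_iff_polar_monotone_general n hn μ w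
end

section
/- Let $n \geq 1$, $\nu > 0$, and let $f \in C^0(\mathbb{R}^n)$ satisfy: for every $x \in \mathbb{R}^n$, every $\lambda > 0$, and every $y$ with $|y - x| \geq \lambda$, one has $\big(\frac{\lambda}{|y-x|}\big)^\nu f\big(x + \frac{\lambda^2 (y-x)}{|y-x|^2}\big) \leq f(y)$. Then $f$ is constant. -/
/-!
Given `a ≠ b` and `s ∈ (0, 1)`, centre a sphere at the point `x` of the line `ab`, beyond `a`, with
`a - x = s² (b - x)`, and give it radius `s ‖b - x‖`: its inversion sends `b` to `a`, so the
hypothesis reads `s ^ ν f a ≤ f b`. Letting `s → 1` gives `f a ≤ f b` for all `a, b`.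
-/

open Set Filter Topology

/-- `f` dominates, outside every sphere, its Kelvin transform of weight `ν` about that sphere. -/
def KelvinDominated {E : Type*} [NormedAddCommGroup E] [NormedSpace ℝ E] (ν : ℝ) (f : E → ℝ) :
    Prop :=
  ∀ x : E, ∀ lam : ℝ, 0 < lam → ∀ y : E, lam ≤ ‖y - x‖ →
    (lam / ‖y - x‖) ^ ν * f (x + (lam ^ 2 / ‖y - x‖ ^ 2) • (y - x)) ≤ f y

theorem le_of_forall_rpow_mul_le {ν A B : ℝ} (h : ∀ s ∈ Ioo (0 : ℝ) 1, s ^ ν * A ≤ B) :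
    A ≤ B := by
  have hlim : Tendsto (fun s : ℝ => s ^ ν * A) (𝓝[<] 1) (𝓝 A) := by
    have hcont : ContinuousAt (fun s : ℝ => s ^ ν * A) 1 :=
      (continuousAt_id.rpow_const (Or.inl one_ne_zero)).mul continuousAt_const
    simpa using hcont.tendsto.mono_left nhdsWithin_le_nhds
  refine le_of_tendsto hlim ?_
  filter_upwards [Ioo_mem_nhdsLT zero_lt_one] with s hs using h s hs

namespace KelvinDominated

variable {E : Type*} [NormedAddCommGroup E] [NormedSpace ℝ E] {ν : ℝ} {f : E → ℝ}

theorem rpow_mul_le (hf : KelvinDominated ν f) {a b : E} (hab : a ≠ b) {s : ℝ}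
    (hs : s ∈ Ioo (0 : ℝ) 1) : s ^ ν * f a ≤ f b := by
  obtain ⟨hs0, hs1⟩ := hs
  have hc : 1 - s ^ 2 ≠ 0 := by nlinarith
  set x : E := (1 - s ^ 2)⁻¹ • (a - s ^ 2 • b)
  have hx : (1 - s ^ 2) • x = a - s ^ 2 • b := by
    simp only [x, smul_smul, mul_inv_cancel₀ hc, one_smul]
  have hinv : x + s ^ 2 • (b - x) = a := by linear_combination (norm := module) hx
  have hbx : 0 < ‖b - x‖ := by
    refine norm_pos_iff.mpr (sub_ne_zero.mpr fun hbx => hab ?_)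
    rw [← hbx] at hx
    linear_combination (norm := module) -hx
  have hlam : s * ‖b - x‖ ≤ ‖b - x‖ := by nlinarith
  have := hf x (s * ‖b - x‖) (by positivity) b hlam
  rwa [mul_div_cancel_right₀ _ hbx.ne', mul_pow, mul_div_cancel_right₀ _ (by positivity), hinv]
    at this

theorem le (hf : KelvinDominated ν f) (a b : E) : f a ≤ f b := by
  rcases eq_or_ne a b with rfl | hab
  · rfl
  · exact le_of_forall_rpow_mul_le fun s hs => hf.rpow_mul_le hab hs

end KelvinDominated

theorem moving_spheres_constant_general (n : ℕ) (ν : ℝ)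
    (f : EuclideanSpace ℝ (Fin n) → ℝ)
    (h : ∀ x : EuclideanSpace ℝ (Fin n), ∀ lam : ℝ, 0 < lam →
      ∀ y : EuclideanSpace ℝ (Fin n), lam ≤ ‖y - x‖ →
        (lam / ‖y - x‖) ^ ν * f (x + (lam ^ 2 / ‖y - x‖ ^ 2) • (y - x)) ≤ f y) :
    ∃ c : ℝ, ∀ y, f y = c :=
  have hf : KelvinDominated ν f := h
  ⟨f 0, fun y => le_antisymm (hf.le y 0) (hf.le 0 y)⟩

/-- if a continuous function satisfies the Kelvin-type inversion
inequality for all centers `x` and all radii `λ`, then it is constant. -/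
theorem moving_spheres_constant (n : ℕ) (hn : 1 ≤ n) (ν : ℝ) (hν : 0 < ν)
    (f : EuclideanSpace ℝ (Fin n) → ℝ) (hf : Continuous f)
    (h : ∀ x : EuclideanSpace ℝ (Fin n), ∀ lam : ℝ, 0 < lam →
      ∀ y : EuclideanSpace ℝ (Fin n), lam ≤ ‖y - x‖ →
        (lam / ‖y - x‖) ^ ν * f (x + (lam ^ 2 / ‖y - x‖ ^ 2) • (y - x)) ≤ f y) :
    ∃ c : ℝ, ∀ y, f y = c :=
  moving_spheres_constant_general n ν f h
end

section
/- Let $n \geq 1$, $\nu > 0$, and let $f \in C^0(\mathbb{R}^n \setminus \{0\})$ satisfy: for every $x \in \mathbb{R}^n$, every $0 < \lambda \leq |x|$, and every $y \in \mathbb{R}^n \setminus (B_\lambda(x) \cup \{0\})$, one has $\big(\frac{\lambda}{|y-x|}\big)^\nu f\big(x + \frac{\lambda^2 (y-x)}{|y-x|^2}\big) \leq f(y)$. Then $f$ is radially symmetric about the origin, i.e. $f(y)$ depends only on $|y|$, and the resulting function of $r = |y|$ is non-increasing on $(0,\infty)$. -/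
open Set Filter Topology

/-!
Let `a ≠ 0` and `‖a‖ ≤ ‖b‖`. Put the centre `x` on the ray from `a` through `b`, beyond `b`,
and choose the radius `λ = q ‖a - x‖` so that the inversion in `∂B_λ(x)` sends `a` to `b`; this
forces `x = b + s (b - a)` with `s = q² / (1 - q²)`. Since `‖a‖ ≤ ‖b‖`, the angle at `b` between
`0` and `x` is not acute, so `‖x‖² ≥ s (1 + s) ‖b - a‖² = λ²` and the sphere does not enclose the
origin. The hypothesis then gives `q ^ ν f(b) ≤ f(a)` for every `q ∈ (0, 1)`, and `q → 1` yields
`f(b) ≤ f(a)`. Applied in both directions this makes `f` radial, and the profile non-increasing.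
-/

def InversionInequality {E : Type*} [NormedAddCommGroup E] [NormedSpace ℝ E] (ν : ℝ)
    (f : E → ℝ) : Prop :=
  ∀ x : E, ∀ lam : ℝ, 0 < lam → lam ≤ ‖x‖ → ∀ y : E, y ≠ 0 → lam ≤ ‖y - x‖ →
    (lam / ‖y - x‖) ^ ν * f (x + (lam ^ 2 / ‖y - x‖ ^ 2) • (y - x)) ≤ f y

theorem le_of_forall_rpow_mul_le_s4 {ν c C : ℝ} (h : ∀ q ∈ Ioo (0 : ℝ) 1, q ^ ν * c ≤ C) :
    c ≤ C := by
  have hlim : Tendsto (fun q : ℝ => q ^ ν * c) (𝓝[<] 1) (𝓝 c) := by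
    simpa using ((continuousAt_id.rpow_const (Or.inl one_ne_zero)).tendsto.mono_left
      nhdsWithin_le_nhds).mul_const c
  exact le_of_tendsto hlim (eventually_of_mem (Ioo_mem_nhdsLT one_pos) h)

section InnerProductSpace

variable {E : Type*} [NormedAddCommGroup E] [InnerProductSpace ℝ E]

theorem norm_sub_sq_le_two_inner {a b : E} (hab : ‖a‖ ≤ ‖b‖) :
    ‖b - a‖ ^ 2 ≤ 2 * inner ℝ b (b - a) := by
  have h := norm_sub_sq_real b (b - a)
  rw [sub_sub_cancel] at h
  nlinarith [pow_le_pow_left₀ (norm_nonneg a) hab 2]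

theorem mul_one_add_mul_norm_sub_sq_le {a b : E} (hab : ‖a‖ ≤ ‖b‖) {s : ℝ} (hs : 0 ≤ s) :
    s * (1 + s) * ‖b - a‖ ^ 2 ≤ ‖b + s • (b - a)‖ ^ 2 := by
  rw [norm_add_sq_real, real_inner_smul_right, norm_smul, Real.norm_of_nonneg hs]
  nlinarith [mul_nonneg hs (sub_nonneg.mpr (norm_sub_sq_le_two_inner hab)), sq_nonneg ‖b‖]

namespace InversionInequality

variable {ν : ℝ} {f : E → ℝ}

theorem rpow_mul_le (hf : InversionInequality ν f) {a b : E} (ha : a ≠ 0) (hab : ‖a‖ ≤ ‖b‖)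
    (hne : a ≠ b) {q : ℝ} (hq : q ∈ Ioo 0 1) : q ^ ν * f b ≤ f a := by
  obtain ⟨hq0, hq1⟩ := hq
  have hq2 : 0 < 1 - q ^ 2 := by nlinarith
  set s := q ^ 2 / (1 - q ^ 2)
  set x := b + s • (b - a)
  have hs : 0 ≤ s := by positivity
  have hqs : q ^ 2 * (1 + s) = s := by simp only [s]; field_simp; ring
  have hax : a - x = -(1 + s) • (b - a) := by module
  have hd : 0 < ‖b - a‖ := norm_sub_pos_iff.mpr hne.symm
  have hnorm : ‖a - x‖ = (1 + s) * ‖b - a‖ := by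
    rw [hax, norm_smul, norm_neg, Real.norm_of_nonneg (by positivity)]
  have hpos : 0 < ‖a - x‖ := by rw [hnorm]; positivity
  have hinv : x + q ^ 2 • (a - x) = b := by
    rw [hax, smul_smul, mul_neg, hqs]
    module
  have hcentre : q * ‖a - x‖ ≤ ‖x‖ := by
    refine (pow_le_pow_iff_left₀ (by positivity) (norm_nonneg x) two_ne_zero).mp ?_
    calc (q * ‖a - x‖) ^ 2 = s * (1 + s) * ‖b - a‖ ^ 2 := by
          rw [hnorm]; linear_combination (1 + s) * ‖b - a‖ ^ 2 * hqs
      _ ≤ ‖x‖ ^ 2 := mul_one_add_mul_norm_sub_sq_le hab hs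
  have hout : q * ‖a - x‖ ≤ ‖a - x‖ := mul_le_of_le_one_left hpos.le hq1.le
  have key := hf x (q * ‖a - x‖) (by positivity) hcentre a ha hout
  rwa [mul_div_cancel_right₀ _ hpos.ne', mul_pow, mul_div_cancel_right₀ _ (by positivity),
    hinv] at key

theorem le_of_norm_le (hf : InversionInequality ν f) {a b : E} (ha : a ≠ 0)
    (hab : ‖a‖ ≤ ‖b‖) : f b ≤ f a := by
  rcases eq_or_ne a b with rfl | hne
  · exact le_rfl
  · exact le_of_forall_rpow_mul_le_s4 fun q hq => hf.rpow_mul_le ha hab hne hq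

end InversionInequality

theorem exists_antitoneOn_comp_norm {f : E → ℝ}
    (hf : ∀ a b : E, a ≠ 0 → ‖a‖ ≤ ‖b‖ → f b ≤ f a) :
    ∃ g : ℝ → ℝ, (∀ y : E, y ≠ 0 → f y = g ‖y‖) ∧ AntitoneOn g (Ioi 0) := by
  rcases subsingleton_or_nontrivial E with hE | hE
  · exact ⟨0, fun y hy => absurd (Subsingleton.elim y 0) hy, fun _ _ _ _ _ => le_rfl⟩
  obtain ⟨e, he⟩ := exists_norm_eq E zero_le_one
  have hre : ∀ {r : ℝ}, 0 < r → ‖r • e‖ = r := fun hr => by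
    rw [norm_smul, he, mul_one, Real.norm_of_nonneg hr.le]
  have hre0 : ∀ {r : ℝ}, 0 < r → r • e ≠ 0 := fun hr =>
    norm_ne_zero_iff.mp (by rw [hre hr]; exact hr.ne')
  refine ⟨fun r => f (r • e), fun y hy => ?_, fun r hr s hs hrs => ?_⟩
  · have hy' := hre (norm_pos_iff.mpr hy)
    exact le_antisymm (hf _ _ (hre0 (norm_pos_iff.mpr hy)) hy'.le) (hf _ _ hy hy'.ge)
  · exact hf _ _ (hre0 hr) (by rwa [hre hr, hre hs])

end InnerProductSpace

theorem moving_spheres_radial_general (n : ℕ) (ν : ℝ)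
    (f : EuclideanSpace ℝ (Fin n) → ℝ)
    (h : ∀ x : EuclideanSpace ℝ (Fin n), ∀ lam : ℝ, 0 < lam → lam ≤ ‖x‖ →
      ∀ y : EuclideanSpace ℝ (Fin n), y ≠ 0 → lam ≤ ‖y - x‖ →
        (lam / ‖y - x‖) ^ ν * f (x + (lam ^ 2 / ‖y - x‖ ^ 2) • (y - x)) ≤ f y) :
    ∃ g : ℝ → ℝ, (∀ y : EuclideanSpace ℝ (Fin n), y ≠ 0 → f y = g ‖y‖) ∧
      AntitoneOn g (Set.Ioi (0 : ℝ)) :=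
  exists_antitoneOn_comp_norm fun _ _ ha hab => InversionInequality.le_of_norm_le h ha hab

/-- if a continuous function on `ℝⁿ \ {0}` satisfies the Kelvin-type
inversion inequality for all spheres not enclosing the origin, then it is radially
symmetric about the origin and non-increasing in the radius. -/
theorem moving_spheres_radial (n : ℕ) (hn : 1 ≤ n) (ν : ℝ) (hν : 0 < ν)
    (f : EuclideanSpace ℝ (Fin n) → ℝ)
    (hf : ContinuousOn f {y : EuclideanSpace ℝ (Fin n) | y ≠ 0})
    (h : ∀ x : EuclideanSpace ℝ (Fin n), ∀ lam : ℝ, 0 < lam → lam ≤ ‖x‖ →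
      ∀ y : EuclideanSpace ℝ (Fin n), y ≠ 0 → lam ≤ ‖y - x‖ →
        (lam / ‖y - x‖) ^ ν * f (x + (lam ^ 2 / ‖y - x‖ ^ 2) • (y - x)) ≤ f y) :
    ∃ g : ℝ → ℝ, (∀ y : EuclideanSpace ℝ (Fin n), y ≠ 0 → f y = g ‖y‖) ∧
      AntitoneOn g (Set.Ioi (0 : ℝ)) :=
  moving_spheres_radial_general n ν f h
end

section
/- Let $n \geq 3$ and suppose $v \in C^0(\mathbb{R}^n)$, $v > 0$, satisfies: for every $x \in \mathbb{R}^n$ and every $\lambda > 0$, $v_{x,\lambda}(y) := \frac{\lambda^{n-2}}{|y-x|^{n-2}} v\big(x + \frac{\lambda^2(y-x)}{|y-x|^2}\big) \leq v(y)$ for all $|y - x| \geq \lambda$. Then for every fixed $x$ and unit vector $e$, the function $r \mapsto r^{\frac{n-2}{2}} v(x + re)$ is non-decreasing in $r > 0$; consequently $\liminf_{|y| \to \infty} |y|^{n-2} v(y) = \infty$ unless $v$ is constant, and in fact $v$ must be constant. -/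
/-!
Given two distinct points `y` and `z`, put the centre `x` on the line through them, beyond `z`
and far away, and choose the radius so that the inversion in the sphere `∂B_λ(x)` sends `y` to `z`.
The Kelvin inequality at `y` then reads `(λ / |y - x|)^(n-2) v(z) ≤ v(y)`, and moving `x` off to
infinity drives the ratio `λ / |y - x|` to `1`. Hence `v z ≤ v y` for all `y, z`, so `v` is
constant, and the remaining claims follow from constancy and positivity.
-/

open Metric Set Filter Topology

section Kelvin

variable {E : Type*} [NormedAddCommGroup E] [NormedSpace ℝ E]

/-- The centre `y + s • (z - y)` with `s = (1 - q²)⁻¹` and the radius `q s |y - z|` make the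
inversion send `y` to `z` with ratio `λ / |y - x| = q`. -/
theorem exists_sphere_inversion_eq {y z : E} (hyz : y ≠ z) {q : ℝ} (hq0 : 0 < q) (hq1 : q < 1) :
    ∃ x : E, ∃ lam : ℝ, 0 < lam ∧ lam ≤ ‖y - x‖ ∧ lam / ‖y - x‖ = q ∧
      x + (lam ^ 2 / ‖y - x‖ ^ 2) • (y - x) = z := by
  have hd : 0 < ‖y - z‖ := norm_sub_pos_iff.mpr hyz
  have hq2 : 0 < 1 - q ^ 2 := by nlinarith
  set s := (1 - q ^ 2)⁻¹
  have hs0 : 0 < s := inv_pos.mpr hq2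
  have hnorm : ‖y - (y + s • (z - y))‖ = s * ‖y - z‖ := by
    rw [sub_add_cancel_left, norm_neg, norm_smul, Real.norm_of_nonneg hs0.le, norm_sub_rev]
  refine ⟨y + s • (z - y), q * s * ‖y - z‖, by positivity, ?_, ?_, ?_⟩
  · rw [hnorm]
    exact mul_le_mul_of_nonneg_right (mul_le_of_le_one_left hs0.le hq1.le) hd.le
  · rw [hnorm]
    field_simp
  · have hratio : (q * s * ‖y - z‖) ^ 2 / ‖y - (y + s • (z - y))‖ ^ 2 = q ^ 2 := by
      rw [hnorm]
      field_simp
    have hsq : s * (1 - q ^ 2) = 1 := inv_mul_cancel₀ hq2.ne'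
    have hcoeff : s - q ^ 2 * s = 1 := by linear_combination hsq
    rw [hratio, sub_add_cancel_left, smul_neg, ← sub_eq_add_neg, smul_smul, add_sub_assoc,
      ← sub_smul, hcoeff, one_smul, add_sub_cancel]

theorem le_of_forall_kelvin_le (k : ℕ) {v : E → ℝ}
    (h : ∀ x : E, ∀ lam : ℝ, 0 < lam → ∀ y : E, lam ≤ ‖y - x‖ →
      (lam ^ k / ‖y - x‖ ^ k) * v (x + (lam ^ 2 / ‖y - x‖ ^ 2) • (y - x)) ≤ v y)
    (z y : E) : v z ≤ v y := by
  rcases eq_or_ne y z with rfl | hyz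
  · exact le_rfl
  have hscaled : ∀ q ∈ Ioo (0 : ℝ) 1, q ^ k * v z ≤ v y := by
    rintro q ⟨hq0, hq1⟩
    obtain ⟨x, lam, hlam, hle, hratio, himage⟩ := exists_sphere_inversion_eq hyz hq0 hq1
    have hkelvin := h x lam hlam y hle
    rwa [himage, ← div_pow, hratio] at hkelvin
  have hlim : Tendsto (fun q : ℝ => q ^ k * v z) (𝓝[<] 1) (𝓝 (v z)) := by
    have hcont : Continuous fun q : ℝ => q ^ k * v z := by fun_prop
    simpa using hcont.continuousWithinAt (s := Iio 1) (x := 1) |>.tendsto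
  exact le_of_tendsto hlim (by filter_upwards [Ioo_mem_nhdsLT zero_lt_one] using hscaled)

theorem exists_eq_const_of_forall_kelvin_le (k : ℕ) {v : E → ℝ}
    (h : ∀ x : E, ∀ lam : ℝ, 0 < lam → ∀ y : E, lam ≤ ‖y - x‖ →
      (lam ^ k / ‖y - x‖ ^ k) * v (x + (lam ^ 2 / ‖y - x‖ ^ 2) • (y - x)) ≤ v y) :
    ∃ c : ℝ, ∀ y, v y = c :=
  ⟨v 0, fun y => (le_of_forall_kelvin_le k h y 0).antisymm (le_of_forall_kelvin_le k h 0 y)⟩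

end Kelvin

theorem all_spheres_implies_constant_general (n : ℕ) (hn : 3 ≤ n)
    (v : EuclideanSpace ℝ (Fin n) → ℝ) (hpos : ∀ x, 0 < v x)
    (h : ∀ x : EuclideanSpace ℝ (Fin n), ∀ lam : ℝ, 0 < lam →
      ∀ y : EuclideanSpace ℝ (Fin n), lam ≤ ‖y - x‖ →
        (lam ^ (n - 2) / ‖y - x‖ ^ (n - 2)) *
            v (x + (lam ^ 2 / ‖y - x‖ ^ 2) • (y - x)) ≤ v y) :
    (∀ x e : EuclideanSpace ℝ (Fin n), ‖e‖ = 1 →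
        ∀ r s : ℝ, 0 < r → r ≤ s →
          r ^ (((n : ℝ) - 2) / 2) * v (x + r • e) ≤ s ^ (((n : ℝ) - 2) / 2) * v (x + s • e)) ∧
    ((¬ ∃ c : ℝ, ∀ y, v y = c) →
        Tendsto (fun y : EuclideanSpace ℝ (Fin n) => ‖y‖ ^ (n - 2) * v y)
          (Bornology.cobounded _) atTop) ∧
    (∃ c : ℝ, ∀ y, v y = c) := by
  obtain ⟨c, hc⟩ := exists_eq_const_of_forall_kelvin_le (n - 2) h
  refine ⟨fun x e _ r s hr hrs => ?_, fun hnc => absurd ⟨c, hc⟩ hnc, c, hc⟩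
  have hexp : (0 : ℝ) ≤ ((n : ℝ) - 2) / 2 := by
    have : (3 : ℝ) ≤ n := by exact_mod_cast hn
    linarith
  rw [hc, hc]
  exact mul_le_mul_of_nonneg_right (Real.rpow_le_rpow hr.le hrs hexp) (hc 0 ▸ hpos 0).le

/-- if the Kelvin transform inequality `v_{x,λ} ≤ v` outside `B_λ(x)`
holds for every center `x` and every radius `λ > 0`, then along every ray
`r ↦ r^{(n-2)/2} v(x + re)` is non-decreasing; consequently
`liminf_{|y|→∞} |y|^{n-2} v(y) = ∞` unless `v` is constant, and in fact `v` is
constant. -/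
theorem all_spheres_implies_constant (n : ℕ) (hn : 3 ≤ n)
    (v : EuclideanSpace ℝ (Fin n) → ℝ) (hv : Continuous v) (hpos : ∀ x, 0 < v x)
    (h : ∀ x : EuclideanSpace ℝ (Fin n), ∀ lam : ℝ, 0 < lam →
      ∀ y : EuclideanSpace ℝ (Fin n), lam ≤ ‖y - x‖ →
        (lam ^ (n - 2) / ‖y - x‖ ^ (n - 2)) *
            v (x + (lam ^ 2 / ‖y - x‖ ^ 2) • (y - x)) ≤ v y) :
    (∀ x e : EuclideanSpace ℝ (Fin n), ‖e‖ = 1 →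
        ∀ r s : ℝ, 0 < r → r ≤ s →
          r ^ (((n : ℝ) - 2) / 2) * v (x + r • e) ≤ s ^ (((n : ℝ) - 2) / 2) * v (x + s • e)) ∧
    ((¬ ∃ c : ℝ, ∀ y, v y = c) →
        Tendsto (fun y : EuclideanSpace ℝ (Fin n) => ‖y‖ ^ (n - 2) * v y)
          (Bornology.cobounded _) atTop) ∧
    (∃ c : ℝ, ∀ y, v y = c) :=
  all_spheres_implies_constant_general n hn v hpos h
end

section
/- Let $\Gamma_k \subset \mathbb{R}^n$ denote the connected component of $\{\lambda \in \mathbb{R}^n : \sigma_k(\lambda) > 0\}$ containing the positive cone $\Gamma_n = \{\lambda : \lambda_i > 0 \ \forall i\}$, where $\sigma_k$ is the $k$-th elementary symmetric polynomial. Then $\Gamma_k = \{\lambda \in \mathbb{R}^n : \sigma_l(\lambda) > 0 \text{ for all } 1 \leq l \leq k\}$. -/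
/-!
For a multiset `s` of reals with `k ≤ card s`, the polynomial `t ↦ σ_k(s + t)` is, up to a
positive factor, the `(card s - k)`-th derivative of `∏ (X + r)`, and its coefficients are
positive multiples of `σ_k(s), σ_{k-1}(s), …, σ_0(s)`. If these are all `≥ 0` with `σ_k(s) > 0`,
this polynomial is positive on `[0, ∞)`; being a derivative of a real-rooted polynomial it is
real-rooted (Rolle), so all its roots are negative and Vieta's formulas make every coefficient
positive, i.e. `σ_l(s) > 0` for all `l ≤ k`.

Hence `Γ_k = {σ_l > 0, l ≤ k}` is relatively closed in `{σ_k > 0}`; it is open, and star-shaped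
about `(1, …, 1)` because `σ_l(a + b y) > 0` for `a ≥ 0`, `b > 0`, `y ∈ Γ_k`. So it is the
connected component.
-/

open Set

/-- The `k`-th elementary symmetric function of `x : Fin n → ℝ`. -/
noncomputable def esymm (n k : ℕ) (x : Fin n → ℝ) : ℝ :=
  ∑ s ∈ Finset.univ.powersetCard k, ∏ i ∈ s, x i

open Polynomial

namespace Multiset

theorem esymm_zero {R : Type*} [CommSemiring R] (s : Multiset R) : s.esymm 0 = 1 := by
  simp [esymm]

theorem esymm_pos {R : Type*} [CommSemiring R] [PartialOrder R] [IsStrictOrderedRing R]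
    {s : Multiset R} (hs : ∀ r ∈ s, 0 < r) {k : ℕ} (hk : k ≤ card s) : 0 < s.esymm k := by
  have hne : powersetCard k s ≠ ∅ := by
    rw [Ne, empty_eq_zero, ← card_eq_zero, card_powersetCard]
    exact (Nat.choose_pos hk).ne'
  simpa [esymm] using sum_lt_sum_of_nonempty (f := fun _ => (0 : R)) hne fun t ht =>
    prod_pos fun r hr => hs r (mem_of_le (mem_powersetCard.mp ht).1 hr)

end Multiset

namespace Polynomial

theorem eval_pos_of_coeff_nonneg {R : Type*} [Semiring R] [PartialOrder R]
    [IsStrictOrderedRing R] {p : R[X]} (hp : ∀ i, 0 ≤ p.coeff i) (h0 : 0 < p.coeff 0) {t : R}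
    (ht : 0 ≤ t) : 0 < p.eval t := by
  rw [eval_eq_sum_range]
  exact Finset.sum_pos' (fun i _ => mul_nonneg (hp i) (pow_nonneg ht i))
    ⟨0, by simp, by simpa using h0⟩

theorem splits_derivative {p : ℝ[X]} (hp : p.Splits) : (derivative p).Splits := by
  rw [splits_iff_card_roots] at hp ⊢
  have := card_roots_le_derivative p
  have := natDegree_derivative_le p
  have := card_roots' (derivative p)
  omega

theorem splits_hasseDeriv {p : ℝ[X]} (hp : p.Splits) (d : ℕ) : (hasseDeriv d p).Splits := by
  have hiter : (derivative^[d] p).Splits := by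
    induction d with
    | zero => exact hp
    | succ d ih => simpa only [Function.iterate_succ_apply'] using splits_derivative ih
  have hfac : hasseDeriv d p = C ((d.factorial : ℝ)⁻¹) * derivative^[d] p := by
    rw [← factorial_smul_hasseDeriv, LinearMap.smul_apply, nsmul_eq_mul, ← mul_assoc,
      ← C_eq_natCast, ← C_mul, inv_mul_cancel₀ (by positivity), C_1, one_mul]
  rw [hfac]
  exact hiter.C_mul _

theorem coeff_pos_of_roots_neg {p : ℝ[X]} (hp : p.Splits) (hroots : ∀ r ∈ p.roots, r < 0)
    (hlc : 0 < p.leadingCoeff) {i : ℕ} (hi : i ≤ p.natDegree) : 0 < p.coeff i := by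
  rw [coeff_eq_esymm_roots_of_splits hp hi, mul_assoc, ← Multiset.esymm_neg]
  refine mul_pos hlc (Multiset.esymm_pos (fun r hr => ?_) ?_)
  · obtain ⟨a, ha, rfl⟩ := Multiset.mem_map.mp hr
    exact neg_pos.mpr (hroots a ha)
  · rw [Multiset.card_map, splits_iff_card_roots.mp hp]
    omega

end Polynomial

namespace Multiset

variable {R : Type*}

theorem natDegree_prod_X_add_C [CommSemiring R] [Nontrivial R] (s : Multiset R) :
    (s.map fun r => X + C r).prod.natDegree = card s := by
  rw [natDegree_multiset_prod_of_monic _ fun p hp => ?_]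
  · simp
  · obtain ⟨r, -, rfl⟩ := mem_map.mp hp
    exact monic_X_add_C r

theorem esymm_map_add_eq_eval_hasseDeriv [CommSemiring R] (s : Multiset R) (t : R) {k : ℕ}
    (hk : k ≤ card s) :
    (s.map (· + t)).esymm k = (hasseDeriv (card s - k) (s.map fun r => X + C r).prod).eval t := by
  have hshift : ((s.map (· + t)).map fun r => X + C r).prod =
      taylor t (s.map fun r => X + C r).prod := by
    simp only [taylor_apply, multiset_prod_comp, map_map, Function.comp_def, add_comp, X_comp,
      C_comp, C_add]
    congr 2
    funext r
    ring
  rw [← taylor_coeff, ← hshift, prod_X_add_C_coeff _ (by simp), card_map, Nat.sub_sub_self hk]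

theorem coeff_hasseDeriv_prod_X_add_C [CommSemiring R] (s : Multiset R) {k j : ℕ}
    (hk : k ≤ card s) (hj : j ≤ k) :
    (hasseDeriv (card s - k) (s.map fun r => X + C r).prod).coeff j =
      (j + (card s - k)).choose (card s - k) * s.esymm (k - j) := by
  rw [hasseDeriv_coeff, prod_X_add_C_coeff _ (by omega)]
  congr 2
  omega

theorem esymm_map_add_pos {s : Multiset ℝ} {k : ℕ} (hk : k ≤ card s)
    (hs : ∀ l ≤ k, 0 ≤ s.esymm l) (hsk : 0 < s.esymm k) {t : ℝ} (ht : 0 ≤ t) :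
    0 < (s.map (· + t)).esymm k := by
  rw [esymm_map_add_eq_eval_hasseDeriv s t hk]
  refine eval_pos_of_coeff_nonneg (fun j => ?_) ?_ ht
  · rcases le_or_gt j k with hj | hj
    · rw [coeff_hasseDeriv_prod_X_add_C s hk hj]
      exact mul_nonneg (Nat.cast_nonneg _) (hs _ (Nat.sub_le k j))
    · refine (coeff_eq_zero_of_natDegree_lt ?_).ge
      rw [natDegree_hasseDeriv, natDegree_prod_X_add_C]
      omega
  · rw [coeff_hasseDeriv_prod_X_add_C s hk (Nat.zero_le k), Nat.sub_zero]
    exact mul_pos (by simp [Nat.choose_self]) hsk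

theorem esymm_pos_of_esymm_nonneg {s : Multiset ℝ} {k : ℕ} (hk : k ≤ card s)
    (hs : ∀ l ≤ k, 0 ≤ s.esymm l) (hsk : 0 < s.esymm k) {l : ℕ} (hl : l ≤ k) :
    0 < s.esymm l := by
  set q := hasseDeriv (card s - k) (s.map fun r => X + C r).prod
  have hdeg : q.natDegree = k := by
    rw [natDegree_hasseDeriv, natDegree_prod_X_add_C]
    omega
  have hsplit : q.Splits := by
    refine splits_hasseDeriv (Splits.multisetProd fun p hp => ?_) _
    obtain ⟨r, -, rfl⟩ := mem_map.mp hp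
    exact Splits.X_add_C r
  have hroots : ∀ r ∈ q.roots, r < 0 := fun r hr => not_le.mp fun hr0 => by
    have hpos := esymm_map_add_pos hk hs hsk hr0
    rw [esymm_map_add_eq_eval_hasseDeriv s r hk] at hpos
    exact hpos.ne' (isRoot_of_mem_roots hr)
  have hlc : 0 < q.leadingCoeff := by
    rw [leadingCoeff, hdeg, coeff_hasseDeriv_prod_X_add_C s hk le_rfl, Nat.sub_self, esymm_zero,
      mul_one]
    exact_mod_cast Nat.choose_pos (by omega)
  have hcoeff := coeff_pos_of_roots_neg hsplit hroots hlc (i := k - l) (by omega)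
  rw [coeff_hasseDeriv_prod_X_add_C s hk (Nat.sub_le k l), Nat.sub_sub_self hl] at hcoeff
  exact pos_of_mul_pos_right hcoeff (Nat.cast_nonneg _)

end Multiset

theorem esymm_eq_multiset_esymm (n k : ℕ) (x : Fin n → ℝ) :
    esymm n k x = (Finset.univ.val.map x).esymm k :=
  (Finset.esymm_map_val x _ k).symm

theorem continuous_esymm (n k : ℕ) : Continuous (esymm n k) := by
  unfold esymm
  fun_prop

/-- The cone `Γ_k`; since `σ_0 = 1`, the condition at `l = 0` is vacuous. -/
def gardingCone (n k : ℕ) : Set (Fin n → ℝ) := {x | ∀ l ≤ k, 0 < esymm n l x}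

theorem setOf_forall_esymm_pos_eq_gardingCone (n k : ℕ) :
    {x : Fin n → ℝ | ∀ l : ℕ, 1 ≤ l → l ≤ k → 0 < esymm n l x} =
      gardingCone n k := by
  ext x
  refine ⟨fun hx l hl => ?_, fun hx l _ hl => hx l hl⟩
  rcases l.eq_zero_or_pos with rfl | hl0
  · simp [esymm_eq_multiset_esymm, Multiset.esymm_zero]
  · exact hx l hl0 hl

theorem one_mem_gardingCone {n k : ℕ} (hkn : k ≤ n) : (1 : Fin n → ℝ) ∈ gardingCone n k :=
  fun l hl => by simpa [esymm] using Nat.choose_pos (hl.trans hkn)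

theorem isOpen_gardingCone (n k : ℕ) : IsOpen (gardingCone n k) := by
  have : gardingCone n k = ⋂ l ∈ Iic k, {x | 0 < esymm n l x} := by
    ext x
    simp [gardingCone]
  rw [this]
  exact (finite_Iic k).isOpen_biInter fun l _ => isOpen_lt continuous_const (continuous_esymm n l)

theorem closure_gardingCone_inter_subset {n k : ℕ} (hkn : k ≤ n) :
    closure (gardingCone n k) ∩ {x | 0 < esymm n k x} ⊆ gardingCone n k := by
  have hclosed : IsClosed {x : Fin n → ℝ | ∀ l ≤ k, 0 ≤ esymm n l x} := by
    simp only [ofPred_forall]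
    exact isClosed_iInter fun l => isClosed_iInter fun _ =>
      isClosed_le continuous_const (continuous_esymm n l)
  rintro x ⟨hx, hxk⟩ l hl
  have hx' := closure_minimal (fun y hy l hl => (hy l hl).le) hclosed hx
  simp only [mem_ofPred_eq, esymm_eq_multiset_esymm] at hx' hxk ⊢
  exact Multiset.esymm_pos_of_esymm_nonneg (by simpa using hkn) hx' hxk hl

theorem starConvex_gardingCone {n k : ℕ} (hkn : k ≤ n) :
    StarConvex ℝ 1 (gardingCone n k) := by
  intro y hy a b ha hb hab
  rcases hb.eq_or_lt with rfl | hb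
  · simpa [show a = 1 by linarith] using one_mem_gardingCone hkn
  intro l hl
  set s := Finset.univ.val.map y
  have hscaled : ∀ j ≤ l, 0 < (s.map (b • ·)).esymm j := fun j hj => by
    rw [← Multiset.pow_smul_esymm, smul_eq_mul, ← esymm_eq_multiset_esymm]
    exact mul_pos (pow_pos hb j) (hy j (hj.trans hl))
  have hpoint : esymm n l (a • 1 + b • y) = ((s.map (b • ·)).map (· + a)).esymm l := by
    simp only [esymm_eq_multiset_esymm, s, Multiset.map_map]
    congr 2
    funext i
    simp [add_comm]
  rw [hpoint]
  exact Multiset.esymm_map_add_pos (by simpa [s] using hl.trans hkn)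
    (fun j hj => (hscaled j hj).le) (hscaled l le_rfl) ha

theorem gamma_k_characterization_general (n k : ℕ) (hkn : k ≤ n) :
    connectedComponentIn {x : Fin n → ℝ | 0 < esymm n k x} (fun _ => 1) =
      {x : Fin n → ℝ | ∀ l : ℕ, 1 ≤ l → l ≤ k → 0 < esymm n l x} := by
  rw [setOf_forall_esymm_pos_eq_gardingCone]
  have hsub : gardingCone n k ⊆ {x | 0 < esymm n k x} := fun x hx => hx k le_rfl
  have hone := one_mem_gardingCone hkn
  refine Subset.antisymm ?_ (((starConvex_gardingCone hkn).isPathConnected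
    hone).isConnected.isPreconnected.subset_connectedComponentIn hone hsub)
  refine isPreconnected_connectedComponentIn.subset_of_closure_inter_subset (isOpen_gardingCone n k)
    ⟨1, mem_connectedComponentIn (hsub hone), hone⟩ ?_
  exact (inter_subset_inter_right _ (connectedComponentIn_subset _ _)).trans
    (closure_gardingCone_inter_subset hkn)

/-- the connected component of `{σ_k > 0}` containing the positive
cone is exactly `{σ_l > 0 for all 1 ≤ l ≤ k}`. -/
theorem gamma_k_characterization (n k : ℕ) (hn : 1 ≤ n) (hk1 : 1 ≤ k) (hkn : k ≤ n) :
    connectedComponentIn {x : Fin n → ℝ | 0 < esymm n k x} (fun _ => 1) =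
      {x : Fin n → ℝ | ∀ l : ℕ, 1 ≤ l → l ≤ k → 0 < esymm n l x} :=
  gamma_k_characterization_general n k hkn
end
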